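/- Let A be a Novikov algebra over a field k of characteristic zero and let g_A be its associated Lie algebra (with bracket [x,y] = x·y − y·x). Then every term Z_i(A) of the upper central series of g_A is a two-sided ideal of the Novikov algebra A. -/

import Mathlib

/-!
If `I` is a two-sided ideal, so is `{x | [x, y] ∈ I for all y}`: left symmetry and right
commutativity give
`[a·x, y] = a·[x, y] + [x, y]·a - [x, a·y]` and `[x·a, y] = 2 [x, y]·a - [x, y·a]`,
and every term on the right lies in `I`. Induction on `i` then handles every `Z_i`.
-/

variable {k A : Type*} [Field k] [CharZero k] [AddCommGroup A] [Module k A]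

/-- The upper central series of the Lie algebra `g_A` associated to `(A, mul)`
(with bracket `[x,y] = x·y − y·x`), as a chain of subsets:
`Z₀ = {0}` and `Z_{i+1} = {x | [x,y] ∈ Z_i for all y}`. -/
def ucs (mul : A →ₗ[k] A →ₗ[k] A) : ℕ → Set A
  | 0 => {0}
  | i + 1 => {x : A | ∀ y : A, mul x y - mul y x ∈ ucs mul i}

section

variable {R V : Type*} [CommRing R] [AddCommGroup V] [Module R V] (mul : V →ₗ[R] V →ₗ[R] V)

def IsLeftSymmetric : Prop :=
  ∀ x y z : V, mul x (mul y z) - mul (mul x y) z = mul y (mul x z) - mul (mul y x) z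

def IsRightCommutative : Prop :=
  ∀ x y z : V, mul (mul x y) z = mul (mul x z) y

def IsTwoSidedIdeal (I : Submodule R V) : Prop :=
  ∀ a : V, ∀ x ∈ I, mul a x ∈ I ∧ mul x a ∈ I

def commutatorNormalizer (I : Submodule R V) : Submodule R V :=
  ⨅ y : V, I.comap (mul.flip y - mul y)

def ucsSubmodule : ℕ → Submodule R V
  | 0 => ⊥
  | i + 1 => commutatorNormalizer mul (ucsSubmodule i)

variable {mul}

theorem mem_commutatorNormalizer {I : Submodule R V} {x : V} :
    x ∈ commutatorNormalizer mul I ↔ ∀ y : V, mul x y - mul y x ∈ I := by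
  simp [commutatorNormalizer, Submodule.mem_iInf]

theorem commutator_mul_left (hls : IsLeftSymmetric mul) (hnov : IsRightCommutative mul)
    (a x y : V) :
    mul (mul a x) y - mul y (mul a x) =
      mul a (mul x y - mul y x) + mul (mul x y - mul y x) a -
        (mul x (mul a y) - mul (mul a y) x) := by
  have h₁ := hls a x y
  have h₂ := hls y a x
  rw [hnov x a y] at h₁
  rw [hnov y a x] at h₂
  simp only [map_sub, LinearMap.sub_apply]
  linear_combination (norm := abel) -h₁ - h₂

theorem commutator_mul_right (hls : IsLeftSymmetric mul) (hnov : IsRightCommutative mul)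
    (x a y : V) :
    mul (mul x a) y - mul y (mul x a) =
      2 • mul (mul x y - mul y x) a - (mul x (mul y a) - mul (mul y a) x) := by
  have h := hls y x a
  rw [hnov x a y, hnov y a x]
  simp only [map_sub, LinearMap.sub_apply]
  linear_combination (norm := abel) -h

theorem IsTwoSidedIdeal.commutatorNormalizer (hls : IsLeftSymmetric mul)
    (hnov : IsRightCommutative mul) {I : Submodule R V} (hI : IsTwoSidedIdeal mul I) :
    IsTwoSidedIdeal mul (commutatorNormalizer mul I) := by
  intro a x hx
  rw [mem_commutatorNormalizer] at hx
  simp only [mem_commutatorNormalizer]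
  refine ⟨fun y => ?_, fun y => ?_⟩
  · rw [commutator_mul_left hls hnov]
    exact sub_mem (add_mem (hI a _ (hx y)).1 (hI a _ (hx y)).2) (hx _)
  · rw [commutator_mul_right hls hnov]
    exact sub_mem (nsmul_mem (hI a _ (hx y)).2 2) (hx _)

theorem isTwoSidedIdeal_ucsSubmodule (hls : IsLeftSymmetric mul)
    (hnov : IsRightCommutative mul) (i : ℕ) : IsTwoSidedIdeal mul (ucsSubmodule mul i) := by
  induction i with
  | zero =>
    intro a x hx
    rw [ucsSubmodule, Submodule.mem_bot] at hx
    simp [ucsSubmodule, hx]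
  | succ i ih => exact ih.commutatorNormalizer hls hnov

end

theorem coe_ucsSubmodule {K W : Type*} [Field K] [AddCommGroup W] [Module K W]
    (mul : W →ₗ[K] W →ₗ[K] W) (i : ℕ) : (ucsSubmodule mul i : Set W) = ucs mul i := by
  induction i with
  | zero => simp [ucsSubmodule, ucs]
  | succ i ih =>
    ext x
    simp only [ucsSubmodule, ucs, SetLike.mem_coe, mem_commutatorNormalizer, ← ih,
      Set.mem_ofPred_eq]

/-- Let `A` be a Novikov algebra over a field `k` of characteristic
zero. Every term `Z_i(A)` of the upper central series of the associated Lie algebra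
`g_A` is a two-sided ideal of `A`, i.e. a `k`-subspace of `A` closed under left and
right multiplication by arbitrary elements of `A`. -/
theorem novikov_upperCentralSeries_ideal
    (mul : A →ₗ[k] A →ₗ[k] A)
    (hls : ∀ x y z : A,
      mul x (mul y z) - mul (mul x y) z = mul y (mul x z) - mul (mul y x) z)
    (hnov : ∀ x y z : A, mul (mul x y) z = mul (mul x z) y) :
    ∀ i : ℕ, ∃ I : Submodule k A, (I : Set A) = ucs mul i ∧
      ∀ a : A, ∀ x ∈ I, mul a x ∈ I ∧ mul x a ∈ I :=
  fun i => ⟨ucsSubmodule mul i, coe_ucsSubmodule mul i, isTwoSidedIdeal_ucsSubmodule hls hnov i⟩
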